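/- arXiv:1506.07992 — 2 statements merged into one kernel-verified Lean document; each statement's English description precedes it below -/
import Mathlib

section
/- The tangential CR operator of the Heisenberg group, L = 2z ∂/∂w̄ + i ∂/∂z̄, maps the space of complex polynomials in z, z̄, w, w̄ surjectively onto itself. -/
open MvPolynomial

/-- Variables: `X 0 = z`, `X 1 = z̄`, `X 2 = w`, `X 3 = w̄`.
The tangential CR operator of the Heisenberg group,
`L f = 2z ∂f/∂w̄ + i ∂f/∂z̄`, acting formally on polynomials. -/
noncomputable def heisenbergCR (f : MvPolynomial (Fin 4) ℂ) : MvPolynomial (Fin 4) ℂ :=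
  C 2 * X 0 * pderiv 3 f + C Complex.I * pderiv 1 f

/-- Formal antiderivative with respect to `z̄ = X 1`. -/
noncomputable def antider (g : MvPolynomial (Fin 4) ℂ) : MvPolynomial (Fin 4) ℂ :=
  g.support.sum fun s =>
    monomial (s + Finsupp.single 1 1) (coeff s g / ((s 1 : ℂ) + 1))

lemma pderiv_antider (g : MvPolynomial (Fin 4) ℂ) : pderiv 1 (antider g) = g := by
  rw [antider, map_sum]
  conv_rhs => rw [g.as_sum]
  refine Finset.sum_congr rfl fun s _ => ?_
  rw [pderiv_monomial]
  have h1 : (s + Finsupp.single 1 1) - Finsupp.single 1 1 = s := by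
    ext i; simp
  rw [h1, Finsupp.add_apply, Finsupp.single_eq_same]
  push_cast
  rw [div_mul_cancel₀]
  exact_mod_cast Nat.succ_ne_zero (s 1)

lemma degreeOf_antider_le (g : MvPolynomial (Fin 4) ℂ) :
    degreeOf 3 (antider g) ≤ degreeOf 3 g := by
  refine le_trans (degreeOf_sum_le _ _ _) (Finset.sup_le fun s hs => ?_)
  have hs3 : s 3 ≤ degreeOf 3 g := monomial_le_degreeOf 3 hs
  refine le_trans ?_ hs3
  rw [degreeOf_le_iff]
  intro m hm
  have := support_monomial_subset hm
  simp only [Finset.mem_singleton] at this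
  subst this
  simp [Finsupp.add_apply, Finsupp.single_apply]

lemma degreeOf_pderiv3_le {n : ℕ} {f : MvPolynomial (Fin 4) ℂ}
    (h : degreeOf 3 f ≤ n + 1) : degreeOf 3 (pderiv 3 f) ≤ n := by
  conv_lhs => rw [f.as_sum]
  rw [map_sum]
  refine le_trans (degreeOf_sum_le _ _ _) (Finset.sup_le fun s hs => ?_)
  rw [pderiv_monomial, degreeOf_le_iff]
  intro m hm
  have := support_monomial_subset hm
  simp only [Finset.mem_singleton] at this
  subst this
  have hs3 : s 3 ≤ n + 1 := le_trans (monomial_le_degreeOf 3 hs) h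
  rw [Finsupp.tsub_apply, Finsupp.single_eq_same]
  omega

lemma pderiv_eq_zero_of_degreeOf_eq_zero {i : Fin 4} {f : MvPolynomial (Fin 4) ℂ}
    (h : degreeOf i f = 0) : pderiv i f = 0 := by
  apply pderiv_eq_zero_of_notMem_vars
  intro hv
  rw [mem_vars] at hv
  obtain ⟨d, hd, hid⟩ := hv
  have := monomial_le_degreeOf i hd
  rw [h] at this
  simp only [Finsupp.mem_support_iff] at hid
  omega

lemma heisenbergCR_sub (f g : MvPolynomial (Fin 4) ℂ) :
    heisenbergCR (f - g) = heisenbergCR f - heisenbergCR g := by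
  simp only [heisenbergCR, map_sub]
  ring

lemma key (n : ℕ) : ∀ g : MvPolynomial (Fin 4) ℂ, degreeOf 3 g ≤ n →
    ∃ f, heisenbergCR f = g := by
  induction n with
  | zero =>
    intro g hg
    refine ⟨C (-Complex.I) * antider g, ?_⟩
    have hd : degreeOf 3 (C (-Complex.I) * antider g) = 0 := by
      have := le_trans (degreeOf_mul_le 3 (C (-Complex.I)) (antider g))
        (by simpa [degreeOf_C] using degreeOf_antider_le g)
      omega
    rw [heisenbergCR, pderiv_eq_zero_of_degreeOf_eq_zero hd, pderiv_C_mul, pderiv_antider,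
      mul_zero, zero_add, ← mul_assoc, ← C_mul]
    simp [Complex.I_mul_I]
  | succ n ih =>
    intro g hg
    set f₀ := C (-Complex.I) * antider g with hf₀
    have hpd : C Complex.I * pderiv 1 f₀ = g := by
      rw [hf₀, pderiv_C_mul, pderiv_antider, ← mul_assoc, ← C_mul]
      simp [Complex.I_mul_I]
    have hdeg : degreeOf 3 (C 2 * X 0 * pderiv 3 f₀) ≤ n := by
      have h1 : degreeOf 3 f₀ ≤ n + 1 := by
        refine le_trans (degreeOf_mul_le 3 _ _) ?_
        simpa [degreeOf_C] using le_trans (degreeOf_antider_le g) hg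
      refine le_trans (degreeOf_mul_le 3 _ _) ?_
      have h2 : degreeOf 3 (C 2 * X 0 : MvPolynomial (Fin 4) ℂ) ≤ 0 := by
        refine le_trans (degreeOf_mul_le _ _ _) ?_
        simp [degreeOf_C, degreeOf_X]
      have h3 := degreeOf_pderiv3_le h1
      omega
    obtain ⟨h, hh⟩ := ih _ hdeg
    refine ⟨f₀ - h, ?_⟩
    rw [heisenbergCR_sub, hh, heisenbergCR, hpd]
    ring

/-- The Heisenberg CR operator maps the space of complex polynomials in
`z, z̄, w, w̄` surjectively onto itself. -/
theorem heisenbergCR_surjective : Function.Surjective heisenbergCR := by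
  intro g
  exact key (degreeOf 3 g) g le_rfl
end

section
/- The function h : C → C defined by h(ζ) = ζ^k / ζ̄^l for ζ ≠ 0 and h(0) = 0, where k, l are natural numbers with k ≥ l + r and r ≥ 1, is (r−1)-times continuously differentiable (as a function R² → R² = C) at 0. -/
open Complex ComplexConjugate Asymptotics Filter

/-!
Write `h k l ζ = ζ ^ k / conj ζ ^ l`. Away from `0` its real derivative is
`k • h (k - 1) l ζ • id - l • h k (l + 1) ζ • conj`, and `‖h k l ζ‖ = ‖ζ‖ ^ (k - l)`, so for
`k - l ≥ 2` it is also differentiable at `0`, with derivative `0`, which is what the formula gives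
there. Both coefficients lower `k - l` by one, so by induction on `n` the function `h k l` is `C^n`
at `0` whenever `l + n < k`.
-/

noncomputable def powDivConjPow (k l : ℕ) (ζ : ℂ) : ℂ := ζ ^ k / conj ζ ^ l

noncomputable def powDivConjPowDeriv (k l : ℕ) (ζ : ℂ) : ℂ →L[ℝ] ℂ :=
  (k * powDivConjPow (k - 1) l ζ) • ContinuousLinearMap.id ℝ ℂ
    - (l * powDivConjPow k (l + 1) ζ) • (conjCLE : ℂ →L[ℝ] ℂ)

section

variable {k l : ℕ}

theorem norm_powDivConjPow (hlk : l < k) (ζ : ℂ) : ‖powDivConjPow k l ζ‖ = ‖ζ‖ ^ (k - l) := by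
  rcases eq_or_ne ζ 0 with rfl | hζ
  · simp [powDivConjPow, zero_pow (by omega : k ≠ 0), zero_pow (by omega : k - l ≠ 0)]
  · rw [powDivConjPow, norm_div, norm_pow, norm_pow, norm_conj, pow_sub₀ _ (by simpa) hlk.le,
      div_eq_mul_inv]

theorem continuous_powDivConjPow (hlk : l < k) : Continuous (powDivConjPow k l) := by
  refine continuous_iff_continuousAt.2 fun ζ => ?_
  rcases eq_or_ne ζ 0 with rfl | hζ
  · have hkl : k - l ≠ 0 := by omega
    have h0 : powDivConjPow k l 0 = 0 := by simp [powDivConjPow, zero_pow (by omega : k ≠ 0)]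
    rw [ContinuousAt, h0]
    refine squeeze_zero_norm (fun z => (norm_powDivConjPow hlk z).le) ?_
    exact (by fun_prop : Continuous fun z : ℂ => ‖z‖ ^ (k - l)).tendsto' 0 0 (by simp [hkl])
  · exact (continuous_pow k).continuousAt.div (continuous_conj.pow l).continuousAt
      (pow_ne_zero _ ((map_ne_zero _).2 hζ))

theorem hasFDerivAt_powDivConjPow_of_ne_zero {ζ : ℂ} (hζ : ζ ≠ 0) :
    HasFDerivAt (powDivConjPow k l) (powDivConjPowDeriv k l ζ) ζ := by
  have hnum : HasFDerivAt (fun z : ℂ => z ^ k) ((k • ζ ^ (k - 1)) • ContinuousLinearMap.id ℝ ℂ) ζ :=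
    hasFDerivAt_pow k
  have hden : HasFDerivAt (fun z : ℂ => conj z ^ l)
      ((l • conj ζ ^ (l - 1)) • (conjCLE : ℂ →L[ℝ] ℂ)) ζ :=
    conjCLE.hasFDerivAt.pow l
  have hinv := (hasFDerivAt_inv' (𝕜 := ℝ) (pow_ne_zero l ((map_ne_zero _).2 hζ))).comp ζ hden
  refine (hnum.mul hinv).congr_fderiv ?_
  ext w
  simp only [powDivConjPowDeriv, powDivConjPow, nsmul_eq_mul, ContinuousLinearMap.neg_comp,
    smul_neg, Function.comp_apply, add_apply, neg_apply, sub_apply, smul_apply, smul_eq_mul,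
    ContinuousLinearMap.comp_apply, ContinuousLinearEquiv.coe_coe, ContinuousAlgEquiv.coeCLE_apply,
    conjCAE_apply, ContinuousLinearMap.mulLeftRight_apply, ContinuousLinearMap.id_apply]
  rcases l with _ | m
  · simp
  · have hc : conj ζ ≠ 0 := (map_ne_zero _).2 hζ
    simp only [Nat.add_sub_cancel]
    field_simp
    ring

theorem hasFDerivAt_powDivConjPow_zero (h : l + 1 < k) :
    HasFDerivAt (powDivConjPow k l) (0 : ℂ →L[ℝ] ℂ) 0 :=
  (isBigO_of_le _ fun ζ => by simp [norm_powDivConjPow (by omega : l < k)]).hasFDerivAt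
    (n := k - l) (by omega)

theorem hasFDerivAt_powDivConjPow (h : l + 1 < k) (ζ : ℂ) :
    HasFDerivAt (powDivConjPow k l) (powDivConjPowDeriv k l ζ) ζ := by
  rcases eq_or_ne ζ 0 with rfl | hζ
  · convert hasFDerivAt_powDivConjPow_zero h
    ext w
    simp [powDivConjPowDeriv, powDivConjPow, zero_pow (by omega : k - 1 ≠ 0),
      zero_pow (by omega : k ≠ 0)]
  · exact hasFDerivAt_powDivConjPow_of_ne_zero hζ

theorem contDiffAt_powDivConjPow_zero {n : ℕ} (h : l + n < k) :
    ContDiffAt ℝ n (powDivConjPow k l) 0 := by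
  induction n generalizing k l with
  | zero => exact (contDiff_zero.2 (continuous_powDivConjPow h)).contDiffAt
  | succ n ih =>
    rw [Nat.cast_add_one, contDiffAt_succ_iff_hasFDerivAt]
    refine ⟨powDivConjPowDeriv k l,
      ⟨Set.univ, univ_mem, fun ζ _ => hasFDerivAt_powDivConjPow (by omega) ζ⟩, ?_⟩
    have h₁ := ih (k := k - 1) (l := l) (by omega)
    have h₂ := ih (k := k) (l := l + 1) (by omega)
    exact ((contDiffAt_const.mul h₁).smul contDiffAt_const).sub
      ((contDiffAt_const.mul h₂).smul contDiffAt_const)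

end

/-- The function `h(ζ) = ζ^k / ζ̄^l` (with `h(0) = 0`), where `k ≥ l + r` and `r ≥ 1`,
is `(r−1)`-times continuously differentiable (in the real sense) at `0`. -/
theorem zeta_pow_div_conj_pow_contDiffAt (k l r : ℕ) (hr : 1 ≤ r) (hk : l + r ≤ k) :
    ContDiffAt ℝ (r - 1 : ℕ)
      (fun ζ : ℂ => if ζ = 0 then 0 else ζ ^ k / (starRingEnd ℂ ζ) ^ l) 0 := by
  -- With Lean's `0 / 0 = 0`, the case split is redundant once `k ≠ 0`.
  have hfun : (fun ζ : ℂ => if ζ = 0 then 0 else ζ ^ k / (starRingEnd ℂ ζ) ^ l) =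
      powDivConjPow k l := by
    funext ζ
    split_ifs with hζ
    · simp [hζ, powDivConjPow, zero_pow (by omega : k ≠ 0)]
    · rfl
  rw [hfun]
  exact contDiffAt_powDivConjPow_zero (by omega)
end
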